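/- arXiv:2306.09536 — 3 statements merged into one kernel-verified Lean document; each statement's English description precedes it below -/
import Mathlib

section
/- Let F be a non-archimedean local field of residue characteristic p ≥ 3 and let G = Sp₄(F) acting on 𝔤 = 𝔰𝔭₄(F) by conjugation. Let n_d be the regular nilpotent element with entries (2,1)=1, (3,2)=d, (4,3)=−1 (d ∈ F^×), and let e_{a,b,c} be the nilpotent element with bottom-left 2×2 block [[b,a],[c,b]] and all other entries 0. If the binary quadratic form (X,Y) ↦ ⟨X, e_{a,b,c} Y⟩ on span(v₁,v₂) represents d, then e_{a,b,c} lies in the p-adic (analytic) closure of the conjugacy orbit Ad(G(F))·n_d. -/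
/-!
Let `Q(x, y) = c x² + 2b xy + a y²` be the form `⟨X, e_{a,b,c} X⟩` and pick `(x, y)` with
`Q(x, y) = d`. Let `N` be the nilpotent element of the Siegel Levi acting on `span(v₁, v₂)` as
the rank-one map with image and kernel `F·(x, y)`. For every `t ≠ 0`, `M = e_{a,b,c} + t N`
satisfies `M⁴ = 0` and has a cyclic vector `w` with `⟨w, M w⟩ = 0` and `⟨w, M³ w⟩ = −d`; the
basis `w, M w, M² w / d, −M³ w / d` is then symplectic and conjugates `n_d` to `M`. Letting `t`
run through the powers of an element of valuation `< 1` exhibits `e_{a,b,c}` as a limit of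
points of the orbit of `n_d`.
-/

open Matrix

/-- The Gram matrix of the symplectic form
`⟨x,y⟩ = x₁y₄ + x₂y₃ − x₃y₂ − x₄y₁` on `F⁴`. -/
def sympJ (F : Type*) [Field F] : Matrix (Fin 4) (Fin 4) F :=
  !![0, 0, 0, 1; 0, 0, 1, 0; 0, -1, 0, 0; -1, 0, 0, 0]

/-- The symplectic form `⟨x,y⟩ = x₁y₄ + x₂y₃ − x₃y₂ − x₄y₁`. -/
def sympForm {F : Type*} [Field F] (x y : Fin 4 → F) : F :=
  x 0 * y 3 + x 1 * y 2 - x 2 * y 1 - x 3 * y 0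

theorem two_ne_zero_of_odd_natCard {k : Type*} [Field k] (h : Odd (Nat.card k)) :
    (2 : k) ≠ 0 := by
  have : Finite k := Nat.finite_of_card_ne_zero fun h0 ↦ by simp [h0] at h
  have := Fintype.ofFinite k
  refine Ring.two_ne_zero fun hchar ↦ ?_
  have := FiniteField.even_card_of_char_two hchar
  rw [Nat.card_eq_fintype_card, Nat.odd_iff] at h
  omega

theorem two_ne_zero_of_odd_natCard_residueField {K Γ₀ : Type*} [Field K]
    [LinearOrderedCommGroupWithZero Γ₀] (v : Valuation K Γ₀)
    (h : Odd (Nat.card (IsLocalRing.ResidueField v.valuationSubring))) : (2 : K) ≠ 0 := by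
  intro h2
  have h2O : (2 : v.valuationSubring) = 0 := Subtype.ext h2
  exact two_ne_zero_of_odd_natCard h
    (by rw [← map_ofNat (IsLocalRing.residue v.valuationSubring) 2, h2O, map_zero])

namespace Sp4

variable {F : Type*} [Field F]

theorem sympJ_mul_sympJ : sympJ F * sympJ F = -1 := by
  ext i j
  fin_cases i <;> fin_cases j <;> simp [sympJ, mul_apply, Fin.sum_univ_four]

theorem isUnit_det_of_transpose_mul_sympJ_mul {g : Matrix (Fin 4) (Fin 4) F}
    (hg : gᵀ * sympJ F * g = sympJ F) : IsUnit g.det := by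
  refine isUnit_det_of_left_inverse (B := -(sympJ F * gᵀ * sympJ F)) ?_
  calc -(sympJ F * gᵀ * sympJ F) * g = -(sympJ F * (gᵀ * sympJ F * g)) := by
        simp only [Matrix.mul_assoc, Matrix.neg_mul]
    _ = 1 := by rw [hg, sympJ_mul_sympJ, neg_neg]

theorem transpose_mul_sympJ_mul_of_smul {g : Matrix (Fin 4) (Fin 4) F} {k : F} (hk : k ≠ 0)
    (hg : gᵀ * sympJ F * g = k ^ 2 • sympJ F) :
    (k⁻¹ • g)ᵀ * sympJ F * (k⁻¹ • g) = sympJ F := by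
  simp only [transpose_smul, Matrix.smul_mul, Matrix.mul_smul, hg, smul_smul]
  convert one_smul F (sympJ F) using 2
  field_simp

def lowerNilpotent (a b c : F) : Matrix (Fin 4) (Fin 4) F :=
  !![0, 0, 0, 0; 0, 0, 0, 0; b, a, 0, 0; c, b, 0, 0]

def regularNilpotent (d : F) : Matrix (Fin 4) (Fin 4) F :=
  !![0, 0, 0, 0; 1, 0, 0, 0; 0, d, 0, 0; 0, 0, -1, 0]

def leviNilpotent (x y : F) : Matrix (Fin 4) (Fin 4) F :=
  !![-(x * y), x ^ 2, 0, 0; -y ^ 2, x * y, 0, 0; 0, 0, -(x * y), -x ^ 2; 0, 0, y ^ 2, x * y]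

/-- `2 t² d²` times the symplectic basis `w, M w, M² w / d, −M³ w / d`, `M = e_{a,b,c} + t N`. -/
def conjugator (a b c x y d t : F) : Matrix (Fin 4) (Fin 4) F :=
  let r₀ := b * x + a * y
  let r₁ := c * x + b * y
  let D := a * c - b ^ 2
  !![-2 * t * d * r₀, 2 * t ^ 2 * d ^ 2 * x, 0, 0;
     2 * t * d * r₁, 2 * t ^ 2 * d ^ 2 * y, 0, 0;
     D * r₀, t * d * D * x, 2 * t ^ 2 * d * r₀, 2 * t ^ 3 * d ^ 2 * x;
     D * r₁, -(t * d * D * y), 2 * t ^ 2 * d * r₁, -(2 * t ^ 3 * d ^ 2 * y)]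

theorem sympForm_lowerNilpotent_mulVec {a b c : F} {X : Fin 4 → F} (h₂ : X 2 = 0)
    (h₃ : X 3 = 0) :
    sympForm X (lowerNilpotent a b c *ᵥ X) = c * X 0 ^ 2 + 2 * b * X 0 * X 1 + a * X 1 ^ 2 := by
  simp only [sympForm, lowerNilpotent, mulVec, dotProduct, Fin.sum_univ_four, of_apply, cons_val,
    h₂, h₃]
  ring

theorem conjugator_mul_regularNilpotent {a b c x y d t : F}
    (hQ : c * x ^ 2 + 2 * b * x * y + a * y ^ 2 = d) :
    conjugator a b c x y d t * regularNilpotent d =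
      (lowerNilpotent a b c + t • leviNilpotent x y) * conjugator a b c x y d t := by
  subst hQ
  ext i j
  fin_cases i <;> fin_cases j <;>
    simp only [conjugator, regularNilpotent, lowerNilpotent, leviNilpotent, mul_apply,
      Matrix.add_apply, Matrix.smul_apply, smul_eq_mul, Fin.sum_univ_four, of_apply, cons_val,
      Fin.zero_eta, Fin.mk_one, Fin.reduceFinMk] <;> ring

theorem conjugator_transpose_mul_sympJ_mul {a b c x y d t : F}
    (hQ : c * x ^ 2 + 2 * b * x * y + a * y ^ 2 = d) :
    (conjugator a b c x y d t)ᵀ * sympJ F * conjugator a b c x y d t =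
      (2 * t ^ 2 * d ^ 2) ^ 2 • sympJ F := by
  subst hQ
  ext i j
  fin_cases i <;> fin_cases j <;>
    simp only [conjugator, sympJ, mul_apply, transpose_apply, Matrix.smul_apply, smul_eq_mul,
      Fin.sum_univ_four, of_apply, cons_val, Fin.zero_eta, Fin.mk_one, Fin.reduceFinMk] <;> ring

theorem lowerNilpotent_add_smul_leviNilpotent_mem_orbit {a b c x y d t : F} (h2 : (2 : F) ≠ 0)
    (hd : d ≠ 0) (ht : t ≠ 0) (hQ : c * x ^ 2 + 2 * b * x * y + a * y ^ 2 = d) :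
    ∃ g : Matrix (Fin 4) (Fin 4) F, IsUnit g.det ∧ gᵀ * sympJ F * g = sympJ F ∧
      lowerNilpotent a b c + t • leviNilpotent x y = g * regularNilpotent d * g⁻¹ := by
  have hk : 2 * t ^ 2 * d ^ 2 ≠ 0 := by simp [h2, ht, hd]
  set g := (2 * t ^ 2 * d ^ 2)⁻¹ • conjugator a b c x y d t
  have hsymp : gᵀ * sympJ F * g = sympJ F :=
    transpose_mul_sympJ_mul_of_smul hk (conjugator_transpose_mul_sympJ_mul hQ)
  have hdet : IsUnit g.det := isUnit_det_of_transpose_mul_sympJ_mul hsymp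
  refine ⟨g, hdet, hsymp, ?_⟩
  have hconj : g * regularNilpotent d = (lowerNilpotent a b c + t • leviNilpotent x y) * g := by
    rw [Matrix.smul_mul, Matrix.mul_smul, conjugator_mul_regularNilpotent hQ]
  rw [hconj, mul_nonsing_inv_cancel_right _ _ hdet]

end Sp4

theorem stmt5_general {F : Type*} [Field F] [Valued F (WithZero (Multiplicative ℤ))]
    (hq : Odd (Nat.card (IsLocalRing.ResidueField
      (Valued.v : Valuation F (WithZero (Multiplicative ℤ))).valuationSubring)))
    (hnontriv : ∃ π : F, Valued.v π ≠ 0 ∧ Valued.v π < 1)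
    (d : F) (hd : d ≠ 0) (a b c : F)
    (hrep : ∃ X : Fin 4 → F, X 2 = 0 ∧ X 3 = 0 ∧
      sympForm X ((!![0, 0, 0, 0; 0, 0, 0, 0; b, a, 0, 0; c, b, 0, 0]).mulVec X) = d) :
    (!![0, 0, 0, 0; 0, 0, 0, 0; b, a, 0, 0; c, b, 0, 0] : Matrix (Fin 4) (Fin 4) F) ∈
      closure {m : Matrix (Fin 4) (Fin 4) F |
        ∃ g : Matrix (Fin 4) (Fin 4) F, IsUnit g.det ∧ gᵀ * sympJ F * g = sympJ F ∧
          m = g * !![0, 0, 0, 0; 1, 0, 0, 0; 0, d, 0, 0; 0, 0, -1, 0] * g⁻¹} := by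
  obtain ⟨π, hπ0, hπ1⟩ := hnontriv
  obtain ⟨X, hX2, hX3, hXd⟩ := hrep
  have hQ := (Sp4.sympForm_lowerNilpotent_mulVec hX2 hX3).symm.trans hXd
  have h2 : (2 : F) ≠ 0 := two_ne_zero_of_odd_natCard_residueField _ hq
  have hπ : π ≠ 0 := fun h ↦ hπ0 (by rw [h, map_zero])
  have hcont : Continuous fun t : F ↦
      Sp4.lowerNilpotent a b c + t • Sp4.leviNilpotent (X 0) (X 1) := by fun_prop
  have hpath := (hcont.tendsto 0).comp (Valued.tendsto_zero_pow_of_v_lt_one hπ1)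
  rw [zero_smul, add_zero] at hpath
  exact mem_closure_of_tendsto hpath (.of_forall fun n ↦
    Sp4.lowerNilpotent_add_smul_leviNilpotent_mem_orbit h2 hd (pow_ne_zero n hπ) hQ)

/-- Let `F` be a non-archimedean local field of odd residue
characteristic.  Let `n_d` be the regular nilpotent element of `𝔰𝔭₄(F)` with entries
`(2,1) = 1`, `(3,2) = d`, `(4,3) = −1` (`d ∈ Fˣ`), and `e_{a,b,c}` the nilpotent element
with bottom-left `2 × 2` block `!![b, a; c, b]`.  If the binary quadratic form
`(X, Y) ↦ ⟨X, e_{a,b,c} Y⟩` on `span(v₁, v₂)` represents `d`, then `e_{a,b,c}` lies in the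
`p`-adic (analytic) closure of the conjugacy orbit `Ad(Sp₄(F))·n_d`. -/
theorem stmt5 {F : Type*} [Field F] [Valued F (WithZero (Multiplicative ℤ))]
    [CompleteSpace F]
    (hq : Odd (Nat.card (IsLocalRing.ResidueField
      (Valued.v : Valuation F (WithZero (Multiplicative ℤ))).valuationSubring)))
    (hnontriv : ∃ π : F, Valued.v π ≠ 0 ∧ Valued.v π < 1)
    (d : F) (hd : d ≠ 0) (a b c : F)
    (hrep : ∃ X : Fin 4 → F, X 2 = 0 ∧ X 3 = 0 ∧
      sympForm X ((!![0, 0, 0, 0; 0, 0, 0, 0; b, a, 0, 0; c, b, 0, 0]).mulVec X) = d) :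
    (!![0, 0, 0, 0; 0, 0, 0, 0; b, a, 0, 0; c, b, 0, 0] : Matrix (Fin 4) (Fin 4) F) ∈
      closure {m : Matrix (Fin 4) (Fin 4) F |
        ∃ g : Matrix (Fin 4) (Fin 4) F, IsUnit g.det ∧ gᵀ * sympJ F * g = sympJ F ∧
          m = g * !![0, 0, 0, 0; 1, 0, 0, 0; 0, d, 0, 0; 0, 0, -1, 0] * g⁻¹} :=
  stmt5_general hq hnontriv d hd a b c hrep
end

section
/- Let 𝔽_q be a finite field with q odd, and let ε ∈ 𝔽_q^× be a non-square. Then the affine curve E given by ε y² = (ε²/4) x⁴ + 1 with x, y ∈ 𝔽_q^× has an 𝔽_q-rational point. -/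
/-!
Substituting `w = ε x² / 2` turns the curve into `ε y² = w² + 1`, so it suffices to find `w` in
the square class of `2ε` with `w² + 1` a non-square. Writing `χ` for the quadratic character,
`∑ χ(w² + 1) = -1 < 0 = ∑ χ(2ε) χ(w)`, so some `w` has `χ(w² + 1) < χ(2ε) χ(w)`; this forces
`χ(w) = χ(2ε)` and `χ(w² + 1) ≠ 1`. Finally `w² + 1 ≠ 0`: otherwise `2w = (1 + w)²` and `2εw`
would both be squares, hence so would `ε`.
-/

open Finset

section QuadraticChar

variable {F : Type*} [Field F] [Fintype F] [DecidableEq F]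

lemma quadraticChar_sum_mul_add_one (hF : ringChar F ≠ 2) :
    ∑ b : F, quadraticChar F b * quadraticChar F (b + 1) = -1 := by
  have hJ : jacobiSum (quadraticChar F) (quadraticChar F) = -quadraticChar F (-1) := by
    simpa only [(quadraticChar_isQuadratic F).inv] using
      jacobiSum_nontrivial_inv (quadraticChar_ne_one hF)
  calc ∑ b : F, quadraticChar F b * quadraticChar F (b + 1)
      = ∑ t : F, quadraticChar F (-1) * (quadraticChar F t * quadraticChar F (1 - t)) := by
        rw [← Equiv.sum_comp (Equiv.neg F)]
        refine sum_congr rfl fun t _ => ?_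
        rw [Equiv.neg_apply, ← map_mul, ← map_mul, ← map_mul]
        congr 1
        ring
    _ = -quadraticChar F (-1) ^ 2 := by rw [← mul_sum, ← jacobiSum, hJ]; ring
    _ = -1 := by rw [quadraticChar_sq_one (neg_ne_zero.2 one_ne_zero)]

lemma quadraticChar_sum_sq_add_one (hF : ringChar F ≠ 2) :
    ∑ w : F, quadraticChar F (w ^ 2 + 1) = -1 := by
  calc ∑ w : F, quadraticChar F (w ^ 2 + 1)
      = ∑ b : F, ∑ w with w ^ 2 = b, quadraticChar F (w ^ 2 + 1) := (sum_fiberwise _ _ _).symm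
    _ = ∑ b : F, (quadraticChar F b + 1) * quadraticChar F (b + 1) := by
        refine sum_congr rfl fun b _ => ?_
        rw [sum_congr rfl fun w hw => by rw [(mem_filter.1 hw).2], sum_const, nsmul_eq_mul,
          ← quadraticChar_card_sqrts hF b, Set.toFinset_ofPred]
    _ = ∑ b : F, quadraticChar F b * quadraticChar F (b + 1) +
          ∑ b : F, quadraticChar F (b + 1) := by
        simp only [add_mul, one_mul, sum_add_distrib]
    _ = -1 := by
        rw [quadraticChar_sum_mul_add_one hF, Fintype.sum_equiv (Equiv.addRight (1 : F))
          (fun b => quadraticChar F (b + 1)) (quadraticChar F) fun _ => rfl,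
          quadraticChar_sum_zero hF, add_zero]

lemma exists_quadraticChar_eq_and_sq_add_one_ne_one (hF : ringChar F ≠ 2) {a : F} (ha : a ≠ 0) :
    ∃ w : F, quadraticChar F w = quadraticChar F a ∧ quadraticChar F (w ^ 2 + 1) ≠ 1 := by
  have hsum : ∑ w : F, quadraticChar F (w ^ 2 + 1) <
      ∑ w : F, quadraticChar F a * quadraticChar F w := by
    rw [quadraticChar_sum_sq_add_one hF, ← mul_sum, quadraticChar_sum_zero hF, mul_zero]
    norm_num
  obtain ⟨w, -, hw⟩ := exists_lt_of_sum_lt hsum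
  have hw0 : w ≠ 0 := by
    rintro rfl
    simp at hw
  refine ⟨w, ?_, ?_⟩ <;>
  rcases quadraticChar_dichotomy ha with ha' | ha' <;>
  rcases quadraticChar_dichotomy hw0 with hw' | hw' <;>
  rw [ha', hw'] at hw <;>
  rcases quadraticChar_isQuadratic F (w ^ 2 + 1) with h | h | h <;>
  omega

lemma isSquare_mul_of_quadraticChar_eq {a b : F} (ha : a ≠ 0) (hb : b ≠ 0)
    (h : quadraticChar F a = quadraticChar F b) : IsSquare (a * b) :=
  (quadraticChar_one_iff_isSquare (mul_ne_zero ha hb)).1 <| by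
    rw [map_mul, ← h, ← sq, quadraticChar_sq_one ha]

end QuadraticChar

/-- Let `𝔽_q` be a finite field with `q` odd, and let `ε ∈ 𝔽_qˣ` be a
non-square.  Then the affine curve `E : ε y² = (ε²/4) x⁴ + 1` with `x, y ∈ 𝔽_qˣ` has an
`𝔽_q`-rational point. -/
theorem stmt8 {K : Type*} [Field K] [Fintype K] (hq : Odd (Fintype.card K))
    (ε : K) (hε : ε ≠ 0) (hns : ¬IsSquare ε) :
    ∃ x y : K, x ≠ 0 ∧ y ≠ 0 ∧ ε * y ^ 2 = ε ^ 2 / 4 * x ^ 4 + 1 := by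
  classical
  have hF : ringChar K ≠ 2 := fun h =>
    Nat.not_even_iff_odd.2 hq (Nat.even_iff.2 (FiniteField.even_card_of_char_two h))
  have h2 : (2 : K) ≠ 0 := Ring.two_ne_zero hF
  obtain ⟨w, hw, hw1⟩ := exists_quadraticChar_eq_and_sq_add_one_ne_one hF (mul_ne_zero h2 hε)
  have hw0 : w ≠ 0 := fun h0 =>
    mul_ne_zero h2 hε (quadraticChar_eq_zero_iff.1 (by rw [← hw, h0, quadraticChar_zero]))
  obtain ⟨u, hu⟩ := isSquare_mul_of_quadraticChar_eq (mul_ne_zero h2 hε) hw0 hw.symm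
  have hw2 : w ^ 2 + 1 ≠ 0 := fun h => hns <| by
    have h2w : IsSquare (2 * w) := ⟨1 + w, by linear_combination -h⟩
    have hε2 : 2 * ε * w / (2 * w) = ε := by rw [div_eq_iff (mul_ne_zero h2 hw0)]; ring
    simpa only [hε2] using IsSquare.div ⟨u, hu⟩ h2w
  have hχ : quadraticChar K (w ^ 2 + 1) = quadraticChar K ε := by
    rw [quadraticChar_neg_one_iff_not_isSquare.2 hns, quadraticChar_eq_neg_one_iff_not_one hw2]
    exact hw1
  obtain ⟨v, hv⟩ := isSquare_mul_of_quadraticChar_eq hε hw2 hχ.symm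
  have hu0 : u ≠ 0 := by rintro rfl; simp_all
  have hv0 : v ≠ 0 := by rintro rfl; simp_all
  refine ⟨u / ε, v / ε, div_ne_zero hu0 hε, div_ne_zero hv0 hε, ?_⟩
  have h4 : (4 : K) ≠ 0 := by
    have := mul_ne_zero h2 h2
    norm_num at this
    exact this
  rw [div_pow, div_pow, show u ^ 4 = (u * u) ^ 2 by ring, sq v, ← hu, ← hv]
  field_simp
  ring
end

section
/- Let F be a field and let e' and e be two matrices in 𝔰𝔭₄(F) each of which is zero except for its bottom-left 2×2 block, with those blocks being B' and B respectively (both symmetric with respect to the pairing, i.e., of the form [[b,a],[c,b]]). If the binary quadratic forms determined by B' and B (via (X,Y) ↦ ⟨X, e' Y⟩ and (X,Y) ↦ ⟨X, e Y⟩ on span(v₁,v₂)) are isometric, then e' and e are conjugate under Sp₄(F). -/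
/-!
Write `F⁴ = F² ⊕ F²` and `sympJ = !![0, w; -w, 0]` with `w = !![0, 1; 1, 0]`; the nilpotent
element with lower block `!![b, a; c, b]` is `!![0, 0; w Q, 0]` for the Gram matrix
`Q = !![c, b; b, a]`. An isometry `hᵀ Q' h = Q` gives the Siegel Levi element
`g = diag(h⁻¹, w hᵀ w)`: it preserves the form because `(h⁻¹)ᵀ w (w hᵀ w) = w`, and it
conjugates `w Q'` to `(w hᵀ w) (w Q') h = w Q`.
-/

open Matrix

namespace Matrix

variable {n R : Type*} [Fintype n] [DecidableEq n] [CommRing R]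

theorem fromBlocks_diagonal_transpose_mul_offDiag_mul (A D w : Matrix n n R) :
    (fromBlocks A 0 0 D)ᵀ * fromBlocks 0 w (-w) 0 * fromBlocks A 0 0 D =
      fromBlocks 0 (Aᵀ * w * D) (-(Dᵀ * w * A)) 0 := by
  simp [fromBlocks_transpose, fromBlocks_multiply, Matrix.mul_assoc]

theorem fromBlocks_diagonal_mul_lower (A D M : Matrix n n R) :
    fromBlocks A 0 0 D * fromBlocks 0 0 M 0 = fromBlocks 0 0 (D * M) 0 := by
  simp [fromBlocks_multiply]

theorem fromBlocks_lower_mul_diagonal (A D M : Matrix n n R) :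
    fromBlocks 0 0 M 0 * fromBlocks A 0 0 D = fromBlocks 0 0 (M * A) 0 := by
  simp [fromBlocks_multiply]

theorem mul_mul_nonsing_inv_eq_of_mul_eq {g A B : Matrix n n R} (hg : IsUnit g.det)
    (h : g * A = B * g) : g * A * g⁻¹ = B := by
  rw [h, Matrix.mul_assoc, mul_nonsing_inv g hg, Matrix.mul_one]

theorem exists_symplectic_intertwiner_of_congr {w Q Q' h : Matrix n n R}
    (hw : w * w = 1) (hwT : wᵀ = w) (hh : IsUnit h.det) (hQ : hᵀ * Q' * h = Q) :
    ∃ g : Matrix (n ⊕ n) (n ⊕ n) R, IsUnit g.det ∧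
      gᵀ * fromBlocks 0 w (-w) 0 * g = fromBlocks 0 w (-w) 0 ∧
      g * fromBlocks 0 0 (w * Q') 0 = fromBlocks 0 0 (w * Q) 0 * g := by
  have hwD : IsUnit w.det := IsUnit.of_mul_eq_one w.det (by rw [← det_mul, hw, det_one])
  have hhinv : h * h⁻¹ = 1 := mul_nonsing_inv h hh
  refine ⟨fromBlocks h⁻¹ 0 0 (w * hᵀ * w), ?_, ?_, ?_⟩
  · rw [det_fromBlocks_zero₂₁]
    simp [hh, hwD]
  · rw [fromBlocks_diagonal_transpose_mul_offDiag_mul]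
    congr 1
    · calc h⁻¹ᵀ * w * (w * hᵀ * w) = (h * h⁻¹)ᵀ * w := by
            simp only [transpose_mul, ← Matrix.mul_assoc, Matrix.mul_assoc h⁻¹ᵀ w w, hw,
              Matrix.mul_one]
        _ = w := by rw [hhinv, transpose_one, Matrix.one_mul]
    · calc -((w * hᵀ * w)ᵀ * w * h⁻¹) = -(w * (h * h⁻¹)) := by
            simp only [transpose_mul, transpose_transpose, hwT, Matrix.mul_assoc, hw,
              Matrix.one_mul]
        _ = -w := by rw [hhinv, Matrix.mul_one]
  · rw [fromBlocks_diagonal_mul_lower, fromBlocks_lower_mul_diagonal, ← hQ]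
    congr 1
    simp only [Matrix.mul_assoc, hhinv, Matrix.mul_one]
    simp only [← Matrix.mul_assoc, hw, Matrix.one_mul]

end Matrix

def finFourEquivSum : Fin 4 ≃ Fin 2 ⊕ Fin 2 :=
  (finSumFinEquiv (m := 2) (n := 2)).symm

theorem sympJ_eq_submatrix_fromBlocks (F : Type*) [Field F] :
    sympJ F = (fromBlocks 0 !![0, 1; 1, 0] (-!![0, 1; 1, 0]) 0).submatrix
      finFourEquivSum finFourEquivSum := by
  ext i j
  fin_cases i <;> fin_cases j <;>
    simp [sympJ, finFourEquivSum, finSumFinEquiv, Fin.addCases, fromBlocks]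

theorem lowerBlock_eq_submatrix_fromBlocks {F : Type*} [Field F] (a b c : F) :
    !![0, 0, 0, 0; 0, 0, 0, 0; b, a, 0, 0; c, b, 0, 0] =
      (fromBlocks 0 0 (!![0, 1; 1, 0] * !![c, b; b, a]) 0).submatrix
        finFourEquivSum finFourEquivSum := by
  ext i j
  fin_cases i <;> fin_cases j <;>
    simp [finFourEquivSum, finSumFinEquiv, Fin.addCases, fromBlocks]

theorem stmt14_general {F : Type*} [Field F] (a b c a' b' c' : F)
    (hiso : ∃ h : Matrix (Fin 2) (Fin 2) F, IsUnit h.det ∧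
      hᵀ * !![c', b'; b', a'] * h = !![c, b; b, a]) :
    ∃ g : Matrix (Fin 4) (Fin 4) F, IsUnit g.det ∧ gᵀ * sympJ F * g = sympJ F ∧
      g * !![0, 0, 0, 0; 0, 0, 0, 0; b', a', 0, 0; c', b', 0, 0] * g⁻¹ =
        !![0, 0, 0, 0; 0, 0, 0, 0; b, a, 0, 0; c, b, 0, 0] := by
  obtain ⟨h, hdet, hQ⟩ := hiso
  have hw : !![(0 : F), 1; 1, 0] * !![0, 1; 1, 0] = 1 := by simp [one_fin_two]
  have hwT : !![(0 : F), 1; 1, 0]ᵀ = !![0, 1; 1, 0] := by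
    ext i j; fin_cases i <;> fin_cases j <;> rfl
  obtain ⟨g, hg, hsymp, hconj⟩ := exists_symplectic_intertwiner_of_congr hw hwT hdet hQ
  set g₄ := g.submatrix finFourEquivSum finFourEquivSum
  have hg₄ : IsUnit g₄.det := by simpa [g₄] using hg
  refine ⟨g₄, hg₄, ?_, ?_⟩
  · rw [sympJ_eq_submatrix_fromBlocks, transpose_submatrix, submatrix_mul_equiv,
      submatrix_mul_equiv, hsymp]
  · refine mul_mul_nonsing_inv_eq_of_mul_eq hg₄ ?_
    rw [lowerBlock_eq_submatrix_fromBlocks, lowerBlock_eq_submatrix_fromBlocks,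
      submatrix_mul_equiv, submatrix_mul_equiv, hconj]

/-- Let `F` be a field of characteristic ≠ 2, and let
`e' = e_{a',b',c'}` and `e = e_{a,b,c}` be elements of `𝔰𝔭₄(F)` that vanish outside their
bottom-left `2 × 2` blocks `!![b', a'; c', b']` and `!![b, a; c, b]`.  If the binary
quadratic forms determined by these blocks (with Gram matrices `!![c', b'; b', a']` and
`!![c, b; b, a]`) are isometric, then `e'` and `e` are conjugate under `Sp₄(F)`. -/
theorem stmt14 {F : Type*} [Field F] (hchar : ringChar F ≠ 2) (a b c a' b' c' : F)
    (hiso : ∃ h : Matrix (Fin 2) (Fin 2) F, IsUnit h.det ∧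
      hᵀ * !![c', b'; b', a'] * h = !![c, b; b, a]) :
    ∃ g : Matrix (Fin 4) (Fin 4) F, IsUnit g.det ∧ gᵀ * sympJ F * g = sympJ F ∧
      g * !![0, 0, 0, 0; 0, 0, 0, 0; b', a', 0, 0; c', b', 0, 0] * g⁻¹ =
        !![0, 0, 0, 0; 0, 0, 0, 0; b, a, 0, 0; c, b, 0, 0] :=
  stmt14_general a b c a' b' c' hiso
end
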